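/- arXiv:1603.03955 — 2 statements merged into one kernel-verified Lean document; each statement's English description precedes it below -/
import Mathlib

section
/- Fix μ > 0, ν > 0, and η ∈ ℝ with μ + η ≥ 0 and 2μ + η > 0, set μ̃ := 2μ+η and η̃ := μ+η, and fix ρ̂ > 0. For ξ ∈ [−1, 1] and τ := 1 − ξ², let β be the 6×6 complex matrix whose rows are: (0,0,0, iτρ̂+μξ², 0, 0), (0,0,0, 0, iτρ̂+μ̃ξ², 0), (0,0,0, 0, 0, iτρ̂+νξ²), (μ̃⁻¹, 0, 0, 0, −iξη̃μ̃⁻¹, 0), (0, μ⁻¹, 0, −iξη̃μ⁻¹, 0, 0), (0, 0, ν⁻¹, 0, 0, 0). Then β is hyperbolic: every eigenvalue of β has nonzero real part. -/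
/-!
Write an eigenvector for the eigenvalue `i y` as `(u, w) ∈ ℂ³ × ℂ³`. The last three rows express
`u` through `w`, and substituting into the first three leaves `(S + i τ ρ) w = 0`, where
`S = ξ² diag(μ, 2μ+η, ν) + y² diag(2μ+η, μ, ν) + y ξ (μ+η) (e₁e₂ᵀ + e₂e₁ᵀ)` is real symmetric.
A real symmetric matrix has only real eigenvalues, so `w = 0` when `τ ≠ 0`. When `τ = 0` we have
`ξ² = 1`, and `S` is positive definite because `(μ+η)² ≤ (2μ+η)²`. Either way `w = 0`, hence
`u = 0`.
-/

open Complex Matrix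

theorem Matrix.exists_mulVec_eq_smul_of_mem_spectrum {n K : Type*} [Fintype n] [DecidableEq n]
    [Field K] {A : Matrix n n K} {z : K} (hz : z ∈ spectrum K A) :
    ∃ v ≠ 0, A *ᵥ v = z • v := by
  rw [← Matrix.spectrum_toLin'] at hz
  obtain ⟨v, hv⟩ := (Module.End.hasEigenvalue_iff_mem_spectrum.mpr hz).exists_hasEigenvector
  exact ⟨v, hv.2, hv.apply_eq_smul⟩

theorem eq_zero_and_eq_zero_of_det_ne_zero {R : Type*} [CommRing R] [NoZeroDivisors R]
    {a b c d x y : R} (h₁ : a * x + b * y = 0) (h₂ : c * x + d * y = 0)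
    (hdet : a * d - b * c ≠ 0) : x = 0 ∧ y = 0 := by
  constructor
  · refine (mul_eq_zero.mp ?_).resolve_left hdet
    linear_combination d * h₁ - b * h₂
  · refine (mul_eq_zero.mp ?_).resolve_left hdet
    linear_combination a * h₂ - c * h₁

theorem ofReal_add_mul_I_ne_zero {a c : ℝ} (h : a ≠ 0 ∨ c ≠ 0) : (a + c * I : ℂ) ≠ 0 := by
  intro h0
  have hre : a = 0 := by simpa using congrArg re h0
  have him : c = 0 := by simpa using congrArg im h0
  tauto

theorem det_add_mul_I_ne_zero {a b d c : ℝ} (h : b ^ 2 < a * d ∨ c ≠ 0) :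
    ((a + c * I) * (d + c * I) - b * b : ℂ) ≠ 0 := by
  have hdet : ((a + c * I) * (d + c * I) - b * b : ℂ)
      = (a * d - b ^ 2 - c ^ 2 : ℝ) + (c * (a + d) : ℝ) * I := by
    push_cast
    linear_combination c ^ 2 * I_sq
  rw [hdet]
  refine ofReal_add_mul_I_ne_zero ?_
  by_contra! ⟨hre, him⟩
  -- `-c i` would be an eigenvalue of the real symmetric `!![a, b; b, d]`
  have hc : c = 0 := by
    rcases mul_eq_zero.mp him with hc | had
    · exact hc
    · obtain rfl : d = -a := by linarith
      exact pow_eq_zero_iff two_ne_zero |>.mp (by nlinarith [sq_nonneg a, sq_nonneg b])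
  subst hc
  rcases h with hS | hc
  · linarith
  · exact hc rfl

noncomputable def beta (μ η ν ρ ξ : ℝ) : Matrix (Fin 6) (Fin 6) ℂ :=
  !![0, 0, 0, I * (1 - ξ ^ 2) * ρ + μ * ξ ^ 2, 0, 0;
     0, 0, 0, 0, I * (1 - ξ ^ 2) * ρ + (2 * μ + η) * ξ ^ 2, 0;
     0, 0, 0, 0, 0, I * (1 - ξ ^ 2) * ρ + ν * ξ ^ 2;
     (2 * μ + η)⁻¹, 0, 0, 0, -(I * ξ * (μ + η) * (2 * μ + η)⁻¹), 0;
     0, μ⁻¹, 0, -(I * ξ * (μ + η) * μ⁻¹), 0, 0;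
     0, 0, ν⁻¹, 0, 0, 0]

theorem beta_mulVec_eq_smul {μ η ν ρ ξ : ℝ} {z : ℂ} {v : Fin 6 → ℂ} (hμ : μ ≠ 0)
    (hμt : 2 * μ + η ≠ 0) (hν : ν ≠ 0) (hv : beta μ η ν ρ ξ *ᵥ v = z • v) :
    (I * (1 - ξ ^ 2) * ρ + μ * ξ ^ 2) * v 3 = z * v 0 ∧
    (I * (1 - ξ ^ 2) * ρ + (2 * μ + η) * ξ ^ 2) * v 4 = z * v 1 ∧
    (I * (1 - ξ ^ 2) * ρ + ν * ξ ^ 2) * v 5 = z * v 2 ∧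
    v 0 = (2 * μ + η) * z * v 3 + I * ξ * (μ + η) * v 4 ∧
    v 1 = μ * z * v 4 + I * ξ * (μ + η) * v 3 ∧
    v 2 = ν * z * v 5 := by
  have hμt' : (2 * μ + η : ℂ) ≠ 0 := by exact_mod_cast hμt
  have hμ' : (μ : ℂ) ≠ 0 := by exact_mod_cast hμ
  have hν' : (ν : ℂ) ≠ 0 := by exact_mod_cast hν
  have e : ∀ i, (beta μ η ν ρ ξ *ᵥ v) i = z * v i := fun i => by rw [hv]; rfl
  have e0 := e 0; have e1 := e 1; have e2 := e 2; have e3 := e 3; have e4 := e 4; have e5 := e 5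
  simp only [mulVec, dotProduct, beta, ofReal_inv, ofReal_add, ofReal_mul, ofReal_ofNat,
    of_apply, cons_val', cons_val_fin_one, cons_val_zero, Fin.sum_univ_six, zero_mul, cons_val_one,
    add_zero, cons_val, zero_add, neg_mul] at e0 e1 e2 e3 e4 e5
  refine ⟨e0, e1, e2, ?_, ?_, ?_⟩
  · field_simp at e3
    linear_combination e3
  · field_simp at e4
    linear_combination e4
  · field_simp at e5
    linear_combination e5

theorem beta_eigenvector_eq_zero {μ η ν ρ ξ y : ℝ} {v : Fin 6 → ℂ} (hμ : 0 < μ) (hν : 0 < ν)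
    (hηt : 0 ≤ μ + η) (hρ : 0 < ρ) (hv : beta μ η ν ρ ξ *ᵥ v = (y * I) • v) : v = 0 := by
  have hμt : 0 < 2 * μ + η := by linarith
  obtain ⟨e0, e1, e2, e3, e4, e5⟩ := beta_mulVec_eq_smul hμ.ne' hμt.ne' hν.ne' hv
  set c := (1 - ξ ^ 2) * ρ
  set a := (2 * μ + η) * y ^ 2 + μ * ξ ^ 2
  set d := μ * y ^ 2 + (2 * μ + η) * ξ ^ 2
  set b := y * ξ * (μ + η)
  have h5 : ((ν * (y ^ 2 + ξ ^ 2) : ℝ) + c * I : ℂ) * v 5 = 0 := by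
    simp only [c]; push_cast
    linear_combination e2 + y * I * e5 + ν * y ^ 2 * v 5 * I_sq
  have h3 : (a + c * I : ℂ) * v 3 + b * v 4 = 0 := by
    simp only [a, b, c]; push_cast
    linear_combination e0 + y * I * e3 + ((2 * μ + η) * y ^ 2 * v 3 + y * ξ * (μ + η) * v 4) * I_sq
  have h4 : (b : ℂ) * v 3 + (d + c * I) * v 4 = 0 := by
    simp only [d, b, c]; push_cast
    linear_combination e1 + y * I * e4 + (μ * y ^ 2 * v 4 + y * ξ * (μ + η) * v 3) * I_sq
  have hτ : ξ ^ 2 = 1 ∨ c ≠ 0 := by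
    rcases eq_or_ne (ξ ^ 2) 1 with hξ | hξ
    · exact .inl hξ
    · exact .inr (mul_ne_zero (sub_ne_zero.mpr hξ.symm) hρ.ne')
  have hv5 : v 5 = 0 := by
    refine (mul_eq_zero.mp h5).resolve_left (ofReal_add_mul_I_ne_zero (hτ.imp (fun hξ => ?_) id))
    rw [hξ]
    positivity
  have hdet : b ^ 2 < a * d ∨ c ≠ 0 := by
    refine hτ.imp (fun hξ => ?_) id
    have hημ : (μ + η) ^ 2 ≤ (2 * μ + η) ^ 2 := pow_le_pow_left₀ hηt (by linarith) 2
    simp only [a, b, d, mul_pow, hξ]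
    nlinarith [mul_pos hμ hμt, mul_nonneg (mul_nonneg hμ.le hμt.le) (pow_nonneg (sq_nonneg y) 2),
      mul_nonneg (sub_nonneg.mpr hημ) (sq_nonneg y), sq_nonneg y]
  obtain ⟨hv3, hv4⟩ := eq_zero_and_eq_zero_of_det_ne_zero h3 h4 (det_add_mul_I_ne_zero hdet)
  ext i
  fin_cases i <;> simp [e3, e4, e5, hv3, hv4, hv5]

theorem beta_hyperbolic_general
    (μ η ν ρ ξ : ℝ) (hμ : 0 < μ) (hν : 0 < ν) (hηt : 0 ≤ μ + η)
    (hρ : 0 < ρ) :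
    ∀ z ∈ spectrum ℂ
      (!![0, 0, 0, I * (1 - ξ ^ 2) * ρ + μ * ξ ^ 2, 0, 0;
          0, 0, 0, 0, I * (1 - ξ ^ 2) * ρ + (2 * μ + η) * ξ ^ 2, 0;
          0, 0, 0, 0, 0, I * (1 - ξ ^ 2) * ρ + ν * ξ ^ 2;
          (2 * μ + η)⁻¹, 0, 0, 0, -(I * ξ * (μ + η) * (2 * μ + η)⁻¹), 0;
          0, μ⁻¹, 0, -(I * ξ * (μ + η) * μ⁻¹), 0, 0;
          0, 0, ν⁻¹, 0, 0, 0] : Matrix (Fin 6) (Fin 6) ℂ),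
      z.re ≠ 0 := by
  intro z hz hre
  obtain ⟨v, hv0, hv⟩ := Matrix.exists_mulVec_eq_smul_of_mem_spectrum hz
  have hz : z = z.im * I := Complex.ext (by simp [hre]) (by simp)
  rw [hz] at hv
  exact hv0 (beta_eigenvector_eq_zero hμ hν hηt hρ hv)

/-- **Hyperbolicity of `β`** (Guès–Métivier–Williams–Zumbrun). On the parabolic
boundary `λ = iτ`, `τ = 1 − ξ²`, `ξ ∈ [−1,1]`, every eigenvalue of the matrix `β`
arising in the high-frequency analysis has nonzero real part. -/
theorem beta_hyperbolic
    (μ η ν ρ ξ : ℝ) (hμ : 0 < μ) (hν : 0 < ν) (hηt : 0 ≤ μ + η) (hμt : 0 < 2 * μ + η)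
    (hρ : 0 < ρ) (hξ : ξ ∈ Set.Icc (-1 : ℝ) 1) :
    ∀ z ∈ spectrum ℂ
      (!![0, 0, 0, I * (1 - ξ ^ 2) * ρ + μ * ξ ^ 2, 0, 0;
          0, 0, 0, 0, I * (1 - ξ ^ 2) * ρ + (2 * μ + η) * ξ ^ 2, 0;
          0, 0, 0, 0, 0, I * (1 - ξ ^ 2) * ρ + ν * ξ ^ 2;
          (2 * μ + η)⁻¹, 0, 0, 0, -(I * ξ * (μ + η) * (2 * μ + η)⁻¹), 0;
          0, μ⁻¹, 0, -(I * ξ * (μ + η) * μ⁻¹), 0, 0;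
          0, 0, ν⁻¹, 0, 0, 0] : Matrix (Fin 6) (Fin 6) ℂ),
      z.re ≠ 0 :=
  beta_hyperbolic_general μ η ν ρ ξ hμ hν hηt hρ
end

section
/- Let k, m ≥ 1, let N = blockdiag(N₋, N₊) with N₋ ∈ ℂ^{k×k}, N₊ ∈ ℂ^{m×m} satisfying (N₋+N₋*)/2 ≤ c₋ I and (N₊+N₊*)/2 ≥ c₊ I, and let Θ ∈ ℂ^{(k+m)×(k+m)} have blocks Θ_{--}, Θ_{-+}, Θ_{+-}, Θ_{++} with ℓ² operator norms θ₋₋, θ₋₊, θ₊₋, θ₊₊, where θ₋₊, θ₊₋ > 0. Assume δ := c₊ − c₋ > θ₋₋ + θ₊₊ + 2√(θ₋₊θ₊₋), and let ζ₋ < ζ₊ be the roots of θ₊₋ζ² − (δ−θ₋₋−θ₊₊)ζ + θ₋₊. Then every eigenvector w = (w₋, w₊) ∈ ℂᵏ × ℂᵐ of N + Θ satisfies either ‖w₋‖ ≤ ζ₋ ‖w₊‖ or ‖w₋‖ ≥ ζ₊ ‖w₊‖. -/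
/-!
Pair the two block rows of `(N + Θ) w = μ w` with `w₋` and `w₊` and take real parts: with
`a = ‖w₋‖`, `b = ‖w₊‖` this gives `Re μ · a² ≤ (c₋ + θ₋₋) a² + θ₋₊ a b` and
`(c₊ − θ₊₊) b² − θ₊₋ a b ≤ Re μ · b²`. Eliminating `Re μ` leaves
`θ₊₋ a² − (δ − θ₋₋ − θ₊₊) a b + θ₋₊ b² ≥ 0`, so `a` cannot lie strictly between `ζ₋ b` and `ζ₊ b`.
-/

open scoped Matrix Matrix.Norms.L2Operator ComplexOrder

open Matrix WithLp

lemma le_or_le_of_quadratic_nonneg {α β d a b : ℝ} (hα : 0 < α) (hdisc : 0 ≤ d ^ 2 - 4 * β * α)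
    (h : d * a * b ≤ α * a ^ 2 + β * b ^ 2) :
    a ≤ (d - √(d ^ 2 - 4 * β * α)) / (2 * α) * b ∨
      (d + √(d ^ 2 - 4 * β * α)) / (2 * α) * b ≤ a := by
  set s := √(d ^ 2 - 4 * β * α)
  have hs : s ^ 2 = d ^ 2 - 4 * β * α := Real.sq_sqrt hdisc
  have hfactor : α * ((a - (d - s) / (2 * α) * b) * ((d + s) / (2 * α) * b - a)) =
      -(α * a ^ 2 - d * a * b + β * b ^ 2) := by
    field_simp
    linear_combination b ^ 2 * hs
  by_contra! hcon
  nlinarith [mul_pos hα (mul_pos (sub_pos.2 hcon.1) (sub_pos.2 hcon.2))]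

-- Eliminates `r`, which plays the part of `Re μ`, between the two row estimates.
lemma sub_mul_mul_le_of_bounds {a b p q r s t : ℝ} (ha : 0 ≤ a) (hb : 0 ≤ b) (hq : 0 ≤ q)
    (ht : 0 ≤ t) (h₁ : r * a ^ 2 ≤ p * a ^ 2 + q * (a * b))
    (h₂ : s * b ^ 2 - t * (b * a) ≤ r * b ^ 2) :
    (s - p) * a * b ≤ t * a ^ 2 + q * b ^ 2 := by
  rcases (mul_nonneg ha hb).eq_or_lt with hab | hab
  · rw [mul_assoc, ← hab, mul_zero]
    positivity
  · have hmul : a * b * ((s - p) * a * b) ≤ a * b * (t * a ^ 2 + q * b ^ 2) := by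
      nlinarith [mul_le_mul_of_nonneg_right h₁ (sq_nonneg b),
        mul_le_mul_of_nonneg_right h₂ (sq_nonneg a)]
    exact le_of_mul_le_mul_left hmul hab

section

variable {ι κ : Type*} [Fintype ι] [Fintype κ]

lemma star_dotProduct_self_eq_norm_sq (x : EuclideanSpace ℂ ι) :
    star (ofLp x) ⬝ᵥ ofLp x = ((‖x‖ ^ 2 : ℝ) : ℂ) := by
  rw [dotProduct_comm, ← EuclideanSpace.inner_eq_star_dotProduct, inner_self_eq_norm_sq_to_K]
  push_cast
  rfl

lemma re_star_dotProduct_hermitianPart_mulVec (A : Matrix ι ι ℂ) (x : ι → ℂ) :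
    (star x ⬝ᵥ ((1 / 2 : ℂ) • (A + Aᴴ)) *ᵥ x).re = (star x ⬝ᵥ A *ᵥ x).re := by
  have hconj : (star x ⬝ᵥ Aᴴ *ᵥ x).re = (star x ⬝ᵥ A *ᵥ x).re := by
    rw [dotProduct_mulVec, ← star_mulVec, star_dotProduct, Complex.star_def, Complex.conj_re]
  rw [smul_mulVec, add_mulVec, dotProduct_smul, dotProduct_add, smul_eq_mul, Complex.mul_re,
    Complex.add_re, Complex.add_im, hconj]
  norm_num
  ring

lemma re_mul_norm_sq_eq_of_mulVec_add_mulVec_eq {M : Matrix ι ι ℂ} {B : Matrix ι κ ℂ} {μ : ℂ}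
    {x : EuclideanSpace ℂ ι} {y : EuclideanSpace ℂ κ}
    (h : M *ᵥ ofLp x + B *ᵥ ofLp y = μ • ofLp x) :
    μ.re * ‖x‖ ^ 2 =
      (star (ofLp x) ⬝ᵥ M *ᵥ ofLp x).re + (star (ofLp x) ⬝ᵥ B *ᵥ ofLp y).re := by
  have h' := congrArg (fun z => (star (ofLp x) ⬝ᵥ z).re) h
  simp only [dotProduct_add, dotProduct_smul, star_dotProduct_self_eq_norm_sq, smul_eq_mul,
    Complex.add_re, Complex.re_mul_ofReal] at h'
  exact h'.symm

variable [DecidableEq ι]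

lemma re_star_dotProduct_smul_one_sub_hermitianPart_mulVec (A : Matrix ι ι ℂ) (c : ℝ)
    (x : EuclideanSpace ℂ ι) :
    (star (ofLp x) ⬝ᵥ ((c : ℂ) • (1 : Matrix ι ι ℂ) - (1 / 2 : ℂ) • (A + Aᴴ)) *ᵥ ofLp x).re =
      c * ‖x‖ ^ 2 - (star (ofLp x) ⬝ᵥ A *ᵥ ofLp x).re := by
  rw [sub_mulVec, dotProduct_sub, Complex.sub_re, re_star_dotProduct_hermitianPart_mulVec,
    smul_mulVec, one_mulVec, dotProduct_smul, star_dotProduct_self_eq_norm_sq, smul_eq_mul,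
    ← Complex.ofReal_mul, Complex.ofReal_re]

lemma re_star_dotProduct_mulVec_le_of_posSemidef {A : Matrix ι ι ℂ} {c : ℝ}
    (hA : ((c : ℂ) • (1 : Matrix ι ι ℂ) - (1 / 2 : ℂ) • (A + Aᴴ)).PosSemidef)
    (x : EuclideanSpace ℂ ι) :
    (star (ofLp x) ⬝ᵥ A *ᵥ ofLp x).re ≤ c * ‖x‖ ^ 2 := by
  have h := hA.re_dotProduct_nonneg (ofLp x)
  rw [RCLike.re_to_complex, re_star_dotProduct_smul_one_sub_hermitianPart_mulVec] at h
  linarith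

lemma le_re_star_dotProduct_mulVec_of_posSemidef {A : Matrix ι ι ℂ} {c : ℝ}
    (hA : ((1 / 2 : ℂ) • (A + Aᴴ) - (c : ℂ) • (1 : Matrix ι ι ℂ)).PosSemidef)
    (x : EuclideanSpace ℂ ι) :
    c * ‖x‖ ^ 2 ≤ (star (ofLp x) ⬝ᵥ A *ᵥ ofLp x).re := by
  have h := hA.re_dotProduct_nonneg (ofLp x)
  rw [← neg_sub, neg_mulVec, dotProduct_neg, RCLike.re_to_complex, Complex.neg_re,
    re_star_dotProduct_smul_one_sub_hermitianPart_mulVec] at h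
  linarith

variable [DecidableEq κ]

omit [DecidableEq ι] in
lemma abs_re_star_dotProduct_mulVec_le (A : Matrix ι κ ℂ) (x : EuclideanSpace ℂ ι)
    (y : EuclideanSpace ℂ κ) :
    |(star (ofLp x) ⬝ᵥ A *ᵥ ofLp y).re| ≤ ‖A‖ * (‖x‖ * ‖y‖) := by
  have hinner : star (ofLp x) ⬝ᵥ A *ᵥ ofLp y = inner ℂ x (toLp 2 (A *ᵥ ofLp y)) := by
    rw [EuclideanSpace.inner_eq_star_dotProduct, dotProduct_comm]
  calc |(star (ofLp x) ⬝ᵥ A *ᵥ ofLp y).re| ≤ ‖x‖ * ‖toLp 2 (A *ᵥ ofLp y)‖ := by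
        rw [hinner]
        exact (Complex.abs_re_le_norm _).trans (norm_inner_le_norm _ _)
    _ ≤ ‖x‖ * (‖A‖ * ‖y‖) := by gcongr; exact A.l2_opNorm_mulVec y
    _ = ‖A‖ * (‖x‖ * ‖y‖) := by ring

lemma re_mul_norm_sq_le_of_posSemidef {N T : Matrix ι ι ℂ} {B : Matrix ι κ ℂ} {c : ℝ}
    (hN : ((c : ℂ) • (1 : Matrix ι ι ℂ) - (1 / 2 : ℂ) • (N + Nᴴ)).PosSemidef) {μ : ℂ}
    {x : EuclideanSpace ℂ ι} {y : EuclideanSpace ℂ κ}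
    (h : (N + T) *ᵥ ofLp x + B *ᵥ ofLp y = μ • ofLp x) :
    μ.re * ‖x‖ ^ 2 ≤ (c + ‖T‖) * ‖x‖ ^ 2 + ‖B‖ * (‖x‖ * ‖y‖) := by
  rw [re_mul_norm_sq_eq_of_mulVec_add_mulVec_eq h, add_mulVec, dotProduct_add, Complex.add_re]
  have hN' := re_star_dotProduct_mulVec_le_of_posSemidef hN x
  have hT := (abs_le.mp (abs_re_star_dotProduct_mulVec_le T x x)).2
  have hB := (abs_le.mp (abs_re_star_dotProduct_mulVec_le B x y)).2
  linarith

lemma le_re_mul_norm_sq_of_posSemidef {N T : Matrix ι ι ℂ} {B : Matrix ι κ ℂ} {c : ℝ}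
    (hN : ((1 / 2 : ℂ) • (N + Nᴴ) - (c : ℂ) • (1 : Matrix ι ι ℂ)).PosSemidef) {μ : ℂ}
    {x : EuclideanSpace ℂ ι} {y : EuclideanSpace ℂ κ}
    (h : (N + T) *ᵥ ofLp x + B *ᵥ ofLp y = μ • ofLp x) :
    (c - ‖T‖) * ‖x‖ ^ 2 - ‖B‖ * (‖x‖ * ‖y‖) ≤ μ.re * ‖x‖ ^ 2 := by
  rw [re_mul_norm_sq_eq_of_mulVec_add_mulVec_eq h, add_mulVec, dotProduct_add, Complex.add_re]
  have hN' := le_re_star_dotProduct_mulVec_of_posSemidef hN x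
  have hT := (abs_le.mp (abs_re_star_dotProduct_mulVec_le T x x)).1
  have hB := (abs_le.mp (abs_re_star_dotProduct_mulVec_le B x y)).1
  linarith

end

theorem eigenvector_cone_separation_general (k m : ℕ)
    (Nm : Matrix (Fin k) (Fin k) ℂ) (Np : Matrix (Fin m) (Fin m) ℂ)
    (Θ : Matrix (Fin k ⊕ Fin m) (Fin k ⊕ Fin m) ℂ) (cm cp : ℝ)
    (hNm : ((cm : ℂ) • (1 : Matrix (Fin k) (Fin k) ℂ) -
      (1 / 2 : ℂ) • (Nm + Nmᴴ)).PosSemidef)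
    (hNp : ((1 / 2 : ℂ) • (Np + Npᴴ) -
      (cp : ℂ) • (1 : Matrix (Fin m) (Fin m) ℂ)).PosSemidef)
    (hpm : 0 < ‖Θ.toBlocks₂₁‖)
    (htrack : ‖Θ.toBlocks₁₁‖ + ‖Θ.toBlocks₂₂‖ +
      2 * Real.sqrt (‖Θ.toBlocks₁₂‖ * ‖Θ.toBlocks₂₁‖) < cp - cm) :
    ∀ (μ : ℂ) (w : (Fin k ⊕ Fin m) → ℂ), w ≠ 0 →
      (Matrix.fromBlocks Nm 0 0 Np + Θ) *ᵥ w = μ • w →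
      ‖(EuclideanSpace.equiv (Fin k) ℂ).symm (fun i => w (Sum.inl i))‖ ≤
        (((cp - cm) - ‖Θ.toBlocks₁₁‖ - ‖Θ.toBlocks₂₂‖ -
            Real.sqrt (((cp - cm) - ‖Θ.toBlocks₁₁‖ - ‖Θ.toBlocks₂₂‖) ^ 2 -
              4 * ‖Θ.toBlocks₁₂‖ * ‖Θ.toBlocks₂₁‖)) / (2 * ‖Θ.toBlocks₂₁‖)) *
          ‖(EuclideanSpace.equiv (Fin m) ℂ).symm (fun j => w (Sum.inr j))‖ ∨
      (((cp - cm) - ‖Θ.toBlocks₁₁‖ - ‖Θ.toBlocks₂₂‖ +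
            Real.sqrt (((cp - cm) - ‖Θ.toBlocks₁₁‖ - ‖Θ.toBlocks₂₂‖) ^ 2 -
              4 * ‖Θ.toBlocks₁₂‖ * ‖Θ.toBlocks₂₁‖)) / (2 * ‖Θ.toBlocks₂₁‖)) *
          ‖(EuclideanSpace.equiv (Fin m) ℂ).symm (fun j => w (Sum.inr j))‖ ≤
        ‖(EuclideanSpace.equiv (Fin k) ℂ).symm (fun i => w (Sum.inl i))‖ := by
  intro μ w _ heig
  set u := (EuclideanSpace.equiv (Fin k) ℂ).symm (fun i => w (Sum.inl i))
  set v := (EuclideanSpace.equiv (Fin m) ℂ).symm (fun j => w (Sum.inr j))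
  rw [← Θ.fromBlocks_toBlocks, fromBlocks_add, fromBlocks_mulVec, zero_add, zero_add] at heig
  have hrow₁ : (Nm + Θ.toBlocks₁₁) *ᵥ ofLp u + Θ.toBlocks₁₂ *ᵥ ofLp v = μ • ofLp u :=
    funext fun i => congrFun heig (Sum.inl i)
  have hrow₂ : (Np + Θ.toBlocks₂₂) *ᵥ ofLp v + Θ.toBlocks₂₁ *ᵥ ofLp u = μ • ofLp v :=
    add_comm (Θ.toBlocks₂₁ *ᵥ ofLp u) _ ▸ funext fun j => congrFun heig (Sum.inr j)
  have hquad := sub_mul_mul_le_of_bounds (norm_nonneg u) (norm_nonneg v) (norm_nonneg _)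
    (norm_nonneg _) (re_mul_norm_sq_le_of_posSemidef hNm hrow₁)
    (le_re_mul_norm_sq_of_posSemidef hNp hrow₂)
  have hdisc : 0 ≤ ((cp - cm) - ‖Θ.toBlocks₁₁‖ - ‖Θ.toBlocks₂₂‖) ^ 2 -
      4 * ‖Θ.toBlocks₁₂‖ * ‖Θ.toBlocks₂₁‖ := by
    have hsqrt := Real.sq_sqrt (mul_nonneg (norm_nonneg Θ.toBlocks₁₂) (norm_nonneg Θ.toBlocks₂₁))
    nlinarith [Real.sqrt_nonneg (‖Θ.toBlocks₁₂‖ * ‖Θ.toBlocks₂₁‖)]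
  exact le_or_le_of_quadratic_nonneg hpm hdisc (by convert hquad using 2; ring)

/-- **Eigenvector separation into cones (tracking lemma, constant-coefficient case).**
If `Re N₋ ≤ c₋I`, `Re N₊ ≥ c₊I` and `δ := c₊ − c₋` exceeds
`‖Θ₋₋‖ + ‖Θ₊₊‖ + 2√(‖Θ₋₊‖‖Θ₊₋‖)`, then every eigenvector `w = (w₋, w₊)` of `N + Θ`
satisfies `‖w₋‖ ≤ ζ₋‖w₊‖` or `‖w₋‖ ≥ ζ₊‖w₊‖`, where `ζ₋ < ζ₊` are the roots of
`θ₊₋ζ² − (δ−θ₋₋−θ₊₊)ζ + θ₋₊`. -/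
theorem eigenvector_cone_separation (k m : ℕ) (hk : 1 ≤ k) (hm : 1 ≤ m)
    (Nm : Matrix (Fin k) (Fin k) ℂ) (Np : Matrix (Fin m) (Fin m) ℂ)
    (Θ : Matrix (Fin k ⊕ Fin m) (Fin k ⊕ Fin m) ℂ) (cm cp : ℝ)
    (hNm : ((cm : ℂ) • (1 : Matrix (Fin k) (Fin k) ℂ) -
      (1 / 2 : ℂ) • (Nm + Nmᴴ)).PosSemidef)
    (hNp : ((1 / 2 : ℂ) • (Np + Npᴴ) -
      (cp : ℂ) • (1 : Matrix (Fin m) (Fin m) ℂ)).PosSemidef)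
    (hmp : 0 < ‖Θ.toBlocks₁₂‖) (hpm : 0 < ‖Θ.toBlocks₂₁‖)
    (htrack : ‖Θ.toBlocks₁₁‖ + ‖Θ.toBlocks₂₂‖ +
      2 * Real.sqrt (‖Θ.toBlocks₁₂‖ * ‖Θ.toBlocks₂₁‖) < cp - cm) :
    ∀ (μ : ℂ) (w : (Fin k ⊕ Fin m) → ℂ), w ≠ 0 →
      (Matrix.fromBlocks Nm 0 0 Np + Θ) *ᵥ w = μ • w →
      ‖(EuclideanSpace.equiv (Fin k) ℂ).symm (fun i => w (Sum.inl i))‖ ≤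
        (((cp - cm) - ‖Θ.toBlocks₁₁‖ - ‖Θ.toBlocks₂₂‖ -
            Real.sqrt (((cp - cm) - ‖Θ.toBlocks₁₁‖ - ‖Θ.toBlocks₂₂‖) ^ 2 -
              4 * ‖Θ.toBlocks₁₂‖ * ‖Θ.toBlocks₂₁‖)) / (2 * ‖Θ.toBlocks₂₁‖)) *
          ‖(EuclideanSpace.equiv (Fin m) ℂ).symm (fun j => w (Sum.inr j))‖ ∨
      (((cp - cm) - ‖Θ.toBlocks₁₁‖ - ‖Θ.toBlocks₂₂‖ +
            Real.sqrt (((cp - cm) - ‖Θ.toBlocks₁₁‖ - ‖Θ.toBlocks₂₂‖) ^ 2 -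
              4 * ‖Θ.toBlocks₁₂‖ * ‖Θ.toBlocks₂₁‖)) / (2 * ‖Θ.toBlocks₂₁‖)) *
          ‖(EuclideanSpace.equiv (Fin m) ℂ).symm (fun j => w (Sum.inr j))‖ ≤
        ‖(EuclideanSpace.equiv (Fin k) ℂ).symm (fun i => w (Sum.inl i))‖ :=
  eigenvector_cone_separation_general k m Nm Np Θ cm cp hNm hNp hpm htrack
end
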